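/- Confluence of single-step parallel reduction (diamond property, general form): if T₀ reduces in one parallel step to T₁ and also to T₂ in environment L₀, and L₀ reduces in one parallel step to environments L₁ and L₂, then there exists a term T such that T₁ reduces to T in L₁ and T₂ reduces to T in L₂. -/

import Mathlib

/-!
The diamond property is proved for every pair (L, T) at once, by well-founded induction on the
size of T plus the sizes of the terms stored in L, comparing the last rules of the two reductions.
Reducing the environment together with the term is what closes the δ-cases: the two reducts of
the referenced definition are joined by induction in the shorter environment and then relocated.
The remaining critical pairs rest on three facts about relocation: parallel reduction commutes
with lifting (δ, θ), every reduct of a lifted term is a lift (ζ, which drops an unreferenced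
abbreviation), and lifting is injective. In the β-pairs one side keeps λW in the environment of
the body while the contractum stores ⓝW.V there; the refinement δ(ⓝW.V) ≤ λW reconciles them.
-/

inductive Bk | abbr | abst
deriving DecidableEq

inductive Fk | appl | cast
deriving DecidableEq

inductive Tm
| sort : Nat → Tm
| lref : Nat → Tm
| bind : Bk → Tm → Tm → Tm
| flat : Fk → Tm → Tm → Tm
deriving DecidableEq

inductive Lift : Nat → Nat → Tm → Tm → Prop
| sort (l m k) : Lift l m (.sort k) (.sort k)
| lt {l m i} : i < l → Lift l m (.lref i) (.lref i)
| ge {l m i} : l ≤ i → Lift l m (.lref i) (.lref (i + m))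
| bind {l m b W₁ W₂ T₁ T₂} : Lift l m W₁ W₂ → Lift (l + 1) m T₁ T₂ →
    Lift l m (.bind b W₁ T₁) (.bind b W₂ T₂)
| flat {l m f V₁ V₂ T₁ T₂} : Lift l m V₁ V₂ → Lift l m T₁ T₂ →
    Lift l m (.flat f V₁ T₁) (.flat f V₂ T₂)

inductive Env
| null : Env
| pair : Env → Bk → Tm → Env
deriving DecidableEq

inductive Drop : Nat → Nat → Env → Env → Prop
| atom (l) : Drop l 0 .null .null
| pair {L₁ L₂ b W} : Drop 0 0 L₁ L₂ → Drop 0 0 (.pair L₁ b W) (.pair L₂ b W)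
| drop {m L₁ L₂ b W} : Drop 0 m L₁ L₂ → Drop 0 (m + 1) (.pair L₁ b W) L₂
| skip {l m L₁ L₂ b W₁ W₂} : Drop l m L₁ L₂ → Lift l m W₂ W₁ →
    Drop (l + 1) m (.pair L₁ b W₁) (.pair L₂ b W₂)

inductive Cpr : Env → Tm → Tm → Prop
| sort {L k} : Cpr L (.sort k) (.sort k)
| lref {L i} : Cpr L (.lref i) (.lref i)
| bind {L b W₁ W₂ T₁ T₂} : Cpr L W₁ W₂ → Cpr (.pair L b W₁) T₁ T₂ →
    Cpr L (.bind b W₁ T₁) (.bind b W₂ T₂)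
| flat {L f V₁ V₂ T₁ T₂} : Cpr L V₁ V₂ → Cpr L T₁ T₂ →
    Cpr L (.flat f V₁ T₁) (.flat f V₂ T₂)
| delta {L K V₁ V₂ W₂ i} : Drop 0 i L (.pair K .abbr V₁) → Cpr K V₁ V₂ →
    Lift 0 (i + 1) V₂ W₂ → Cpr L (.lref i) W₂
| beta {L V₁ V₂ W₁ W₂ T₁ T₂} : Cpr L V₁ V₂ → Cpr L W₁ W₂ →
    Cpr (.pair L .abst W₁) T₁ T₂ →
    Cpr L (.flat .appl V₁ (.bind .abst W₁ T₁)) (.bind .abbr (.flat .cast W₂ V₂) T₂)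
| zeta {L V U₁ U₂ T₂} : Cpr (.pair L .abbr V) U₁ U₂ → Lift 0 1 T₂ U₂ →
    Cpr L (.bind .abbr V U₁) T₂
| eps {L U T₁ T₂} : Cpr L T₁ T₂ → Cpr L (.flat .cast U T₁) T₂
| theta {L V₁ V₂ W₂ U₁ U₂ T₁ T₂} : Cpr L V₁ V₂ → Lift 0 1 V₂ W₂ → Cpr L U₁ U₂ →
    Cpr (.pair L .abbr U₁) T₁ T₂ →
    Cpr L (.flat .appl V₁ (.bind .abbr U₁ T₁)) (.bind .abbr U₂ (.flat .appl W₂ T₂))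

inductive Lpr : Env → Env → Prop
| atom : Lpr .null .null
| pair {L₁ L₂ b W₁ W₂} : Lpr L₁ L₂ → Cpr L₁ W₁ W₂ → Lpr (.pair L₁ b W₁) (.pair L₂ b W₂)

inductive LsubR : Env → Env → Prop
| atom (L) : LsubR L .null
| pair {L₁ L₂ b W} : LsubR L₁ L₂ → LsubR (.pair L₁ b W) (.pair L₂ b W)
| beta {L₁ L₂ W V} : LsubR L₁ L₂ →
    LsubR (.pair L₁ .abbr (.flat .cast W V)) (.pair L₂ .abst W)

namespace Tm

def lift (l m : ℕ) : Tm → Tm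
  | sort k => sort k
  | lref i => lref (if i < l then i else i + m)
  | bind b W T => bind b (lift l m W) (lift (l + 1) m T)
  | flat f V T => flat f (lift l m V) (lift l m T)

theorem lift_spec (l m : ℕ) (T : Tm) : Lift l m T (T.lift l m) := by
  induction T generalizing l with
  | sort k => exact .sort l m k
  | lref i =>
    by_cases h : i < l
    · simpa [lift, h] using Lift.lt h
    · simpa [lift, h] using Lift.ge (Nat.le_of_not_lt h)
  | bind b W T ihW ihT => exact .bind (ihW l) (ihT (l + 1))
  | flat f V T ihV ihT => exact .flat (ihV l) (ihT l)

theorem lift_injective (l m : ℕ) : Function.Injective (lift l m) := by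
  intro T₁ T₂ h
  induction T₁ generalizing l T₂ with
  | sort k => cases T₂ <;> simp_all [lift]
  | lref i =>
    cases T₂ <;> simp only [lift, reduceCtorEq, lref.injEq] at h ⊢
    split_ifs at h <;> omega
  | bind b W T ihW ihT =>
    cases T₂ <;> simp only [lift, reduceCtorEq, bind.injEq] at h ⊢
    exact ⟨h.1, ihW l h.2.1, ihT (l + 1) h.2.2⟩
  | flat f V T ihV ihT =>
    cases T₂ <;> simp only [lift, reduceCtorEq, flat.injEq] at h ⊢
    exact ⟨h.1, ihV l h.2.1, ihT l h.2.2⟩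

theorem lift_lift_of_le_of_le {l₁ m₁ l₂ : ℕ} (m₂ : ℕ) (h₁ : l₁ ≤ l₂) (h₂ : l₂ ≤ l₁ + m₁)
    (T : Tm) : (T.lift l₁ m₁).lift l₂ m₂ = T.lift l₁ (m₁ + m₂) := by
  induction T generalizing l₁ l₂ with
  | sort k => rfl
  | lref i => simp only [lift, lref.injEq]; split_ifs <;> omega
  | bind b W T ihW ihT => simp only [lift, ihW h₁ h₂, ihT (by omega : l₁ + 1 ≤ l₂ + 1) (by omega)]
  | flat f V T ihV ihT => simp only [lift, ihV h₁ h₂, ihT h₁ h₂]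

theorem lift_lift_comm {l₁ l₂ : ℕ} (m₁ m₂ : ℕ) (h : l₂ ≤ l₁) (T : Tm) :
    (T.lift l₁ m₁).lift l₂ m₂ = (T.lift l₂ m₂).lift (l₁ + m₂) m₁ := by
  induction T generalizing l₁ l₂ with
  | sort k => rfl
  | lref i => simp only [lift, lref.injEq]; split_ifs <;> omega
  | bind b W T ihW ihT =>
    simp only [lift, ihW h, ihT (by omega : l₂ + 1 ≤ l₁ + 1), Nat.add_right_comm l₁ 1 m₂]
  | flat f V T ihV ihT => simp only [lift, ihV h, ihT h]

theorem exists_lift_of_lift_eq_lift {l₁ m₁ l₂ m₂ : ℕ} (h : l₁ + m₁ ≤ l₂) {A B : Tm}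
    (e : A.lift l₁ m₁ = B.lift l₂ m₂) : ∃ C : Tm, A = C.lift (l₂ - m₁) m₂ ∧ B = C.lift l₁ m₁ := by
  induction A generalizing l₁ l₂ B with
  | sort k =>
    cases B <;> simp only [lift, reduceCtorEq, sort.injEq] at e
    exact ⟨sort k, rfl, by rw [e]; rfl⟩
  | lref a =>
    cases B <;> simp only [lift, reduceCtorEq, lref.injEq] at e
    case lref b =>
      refine ⟨lref (if a < l₁ then a else b - m₁), ?_, ?_⟩ <;>
        simp only [lift, lref.injEq] <;> split_ifs at e ⊢ <;> omega
  | bind b W T ihW ihT =>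
    cases B <;> simp only [lift, reduceCtorEq, bind.injEq] at e
    case bind b' W' T' =>
      obtain ⟨rfl, eW, eT⟩ := e
      obtain ⟨CW, rfl, rfl⟩ := ihW h eW
      obtain ⟨CT, rfl, rfl⟩ := ihT (by omega : l₁ + 1 + m₁ ≤ l₂ + 1) eT
      exact ⟨bind b CW CT, by simp only [lift, show l₂ + 1 - m₁ = l₂ - m₁ + 1 by omega], rfl⟩
  | flat f V T ihV ihT =>
    cases B <;> simp only [lift, reduceCtorEq, flat.injEq] at e
    case flat f' V' T' =>
      obtain ⟨rfl, eV, eT⟩ := e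
      obtain ⟨CV, rfl, rfl⟩ := ihV h eV
      obtain ⟨CT, rfl, rfl⟩ := ihT h eT
      exact ⟨flat f CV CT, rfl, rfl⟩

end Tm

theorem Lift.eq_lift {l m : ℕ} {T U : Tm} (h : Lift l m T U) : U = T.lift l m := by
  induction h with
  | sort => rfl
  | lt h => simp [Tm.lift, h]
  | ge h => simp [Tm.lift, Nat.not_lt.mpr h]
  | bind _ _ ih₁ ih₂ => simp [Tm.lift, ih₁, ih₂]
  | flat _ _ ih₁ ih₂ => simp [Tm.lift, ih₁, ih₂]

theorem Lift.inj_left {l m : ℕ} {T₁ T₂ U : Tm} (h₁ : Lift l m T₁ U) (h₂ : Lift l m T₂ U) :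
    T₁ = T₂ :=
  Tm.lift_injective l m (h₁.eq_lift.symm.trans h₂.eq_lift)

def Tm.size : Tm → ℕ
  | .sort _ | .lref _ => 1
  | .bind _ W T => W.size + T.size + 1
  | .flat _ V T => V.size + T.size + 1

def Env.weight : Env → ℕ
  | .null => 0
  | .pair L _ W => L.weight + W.size

namespace Drop

theorem refl_zero : ∀ L : Env, Drop 0 0 L L
  | .null => .atom 0
  | .pair L _ _ => .pair (refl_zero L)

theorem eq_of_zero_zero : ∀ {L K : Env}, Drop 0 0 L K → K = L
  | .null, _, .atom _ => rfl
  | .pair _ _ _, _, .pair h => by rw [eq_of_zero_zero h]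

theorem zero_unique : ∀ {i : ℕ} {L K₁ K₂ : Env}, Drop 0 i L K₁ → Drop 0 i L K₂ → K₁ = K₂
  | 0, _, _, _, h₁, h₂ => by rw [eq_of_zero_zero h₁, eq_of_zero_zero h₂]
  | _ + 1, _, _, _, .drop h₁, .drop h₂ => zero_unique h₁ h₂

theorem succ_of_pair : ∀ {i : ℕ} {L K : Env} {b : Bk} {W : Tm},
    Drop 0 i L (.pair K b W) → Drop 0 (i + 1) L K
  | 0, _, _, _, _, h => by rw [← eq_of_zero_zero h]; exact .drop (refl_zero _)
  | _ + 1, _, _, _, _, .drop h => .drop (succ_of_pair h)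

theorem weight_le : ∀ {i : ℕ} {L K : Env}, Drop 0 i L K → K.weight ≤ L.weight
  | 0, _, _, h => by rw [eq_of_zero_zero h]
  | _ + 1, .pair _ _ _, _, .drop h => by have := weight_le h; simp only [Env.weight]; omega

theorem trans_ge {l m : ℕ} {L K : Env} (h : Drop l m L K) {i : ℕ} {K₀ : Env}
    (hK : Drop 0 i K K₀) (hi : l ≤ i) : Drop 0 (i + m) L K₀ := by
  induction h generalizing i with
  | atom => simpa using hK
  | pair h => simpa [eq_of_zero_zero h] using hK
  | drop _ ih => exact .drop (ih hK hi)
  | skip _ _ ih =>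
    obtain ⟨i, rfl⟩ : ∃ j, i = j + 1 := ⟨i - 1, by omega⟩
    cases hK with
    | drop hK => rw [Nat.add_right_comm]; exact .drop (ih hK (by omega))

theorem conf_ge {l m : ℕ} {L K : Env} (h : Drop l m L K) {i : ℕ} {K₀ : Env}
    (hL : Drop 0 (i + m) L K₀) (hi : l ≤ i) : Drop 0 i K K₀ := by
  induction h generalizing i with
  | atom => simpa using hL
  | pair h => simpa [eq_of_zero_zero h] using hL
  | drop _ ih => cases hL with | drop hL => exact ih hL hi
  | skip _ _ ih =>
    obtain ⟨i, rfl⟩ : ∃ j, i = j + 1 := ⟨i - 1, by omega⟩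
    rw [Nat.add_right_comm] at hL
    cases hL with
    | drop hL => exact .drop (ih hL (by omega))

theorem trans_lt {d m : ℕ} : ∀ {i : ℕ} {L K K₀ : Env} {b : Bk} {V : Tm},
    Drop (i + d + 1) m L K → Drop 0 i K (.pair K₀ b V) →
    ∃ K' V', Drop 0 i L (.pair K' b V') ∧ Drop d m K' K₀ ∧ Lift d m V V'
  | 0, _, _, _, _, _, .skip h hV, hK => by
    rw [Nat.zero_add] at h hV
    obtain ⟨rfl, rfl, rfl⟩ := Env.pair.inj (eq_of_zero_zero hK)
    exact ⟨_, _, refl_zero _, h, hV⟩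
  | i + 1, _, _, _, _, _, h, .drop hK => by
    rw [show i + 1 + d + 1 = i + d + 1 + 1 by omega] at h
    cases h with
    | skip h _ =>
      obtain ⟨K', V', hL, hd, hV⟩ := trans_lt h hK
      exact ⟨K', V', .drop hL, hd, hV⟩

theorem conf_lt {d m : ℕ} : ∀ {i : ℕ} {L K K₀ : Env} {b : Bk} {W : Tm},
    Drop (i + d + 1) m L K → Drop 0 i L (.pair K₀ b W) →
    ∃ K' V', Drop 0 i K (.pair K' b V') ∧ Drop d m K₀ K' ∧ Lift d m V' W
  | 0, _, _, _, _, _, .skip h hV, hL => by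
    rw [Nat.zero_add] at h hV
    obtain ⟨rfl, rfl, rfl⟩ := Env.pair.inj (eq_of_zero_zero hL)
    exact ⟨_, _, refl_zero _, h, hV⟩
  | i + 1, _, _, _, _, _, h, .drop hL => by
    rw [show i + 1 + d + 1 = i + d + 1 + 1 by omega] at h
    cases h with
    | skip h _ =>
      obtain ⟨K', V', hK, hd, hV⟩ := conf_lt h hL
      exact ⟨K', V', .drop hK, hd, hV⟩

end Drop

theorem Lpr.drop : ∀ {i : ℕ} {L L' K : Env} {b : Bk} {W : Tm},
    Lpr L L' → Drop 0 i L (.pair K b W) →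
    ∃ K' W', Drop 0 i L' (.pair K' b W') ∧ Lpr K K' ∧ Cpr K W W'
  | 0, _, _, _, _, _, hL, hK => by
    obtain rfl := Drop.eq_of_zero_zero hK
    cases hL with
    | pair hL hW => exact ⟨_, _, Drop.refl_zero _, hL, hW⟩
  | _ + 1, _, _, _, _, _, .pair hL _, .drop hK =>
    let ⟨K', W', hK', hKK', hW⟩ := Lpr.drop hL hK
    ⟨K', W', .drop hK', hKK', hW⟩

namespace Cpr

theorem refl (L : Env) : ∀ T : Tm, Cpr L T T
  | .sort _ => .sort
  | .lref _ => .lref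
  | .bind _ _ T => .bind (refl L _) (refl _ T)
  | .flat _ _ _ => .flat (refl L _) (refl L _)

theorem lift {K : Env} {T₁ T₂ : Tm} (h : Cpr K T₁ T₂) {l m : ℕ} {L : Env}
    (hL : Drop l m L K) : Cpr L (T₁.lift l m) (T₂.lift l m) := by
  induction h generalizing l L with
  | sort | lref => exact .refl _ _
  | bind _ _ ihW ihT => exact .bind (ihW hL) (ihT (hL.skip (Tm.lift_spec ..)))
  | flat _ _ ihV ihT => exact .flat (ihV hL) (ihT hL)
  | @delta _ _ _ V₂ _ i hK hV hW ih =>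
    obtain rfl := hW.eq_lift
    by_cases hi : i < l
    · obtain ⟨d, rfl⟩ : ∃ d, l = i + d + 1 := ⟨l - (i + 1), by omega⟩
      obtain ⟨K', V', hK', hd, hV'⟩ := hL.trans_lt hK
      obtain rfl := hV'.eq_lift
      simp only [Tm.lift, if_pos hi]
      refine .delta hK' (ih hd) ?_
      rw [show i + d + 1 = d + (i + 1) by omega, ← Tm.lift_lift_comm m (i + 1) (Nat.zero_le d)]
      exact Tm.lift_spec ..
    · simp only [Tm.lift, if_neg hi]
      refine .delta (hL.trans_ge hK (by omega)) hV ?_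
      rw [Tm.lift_lift_of_le_of_le m (Nat.zero_le l) (by omega), Nat.add_right_comm]
      exact Tm.lift_spec ..
  | beta _ _ _ ihV ihW ihT => exact .beta (ihV hL) (ihW hL) (ihT (hL.skip (Tm.lift_spec ..)))
  | zeta _ hU ih =>
    obtain rfl := hU.eq_lift
    refine .zeta (ih (hL.skip (Tm.lift_spec ..))) ?_
    rw [← Tm.lift_lift_comm m 1 (Nat.zero_le l)]
    exact Tm.lift_spec ..
  | eps _ ih => exact .eps (ih hL)
  | theta _ hW _ _ ihV ihU ihT =>
    obtain rfl := hW.eq_lift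
    refine .theta (ihV hL) ?_ (ihU hL) (ihT (hL.skip (Tm.lift_spec ..)))
    rw [← Tm.lift_lift_comm m 1 (Nat.zero_le l)]
    exact Tm.lift_spec ..

theorem inv_lift {L : Env} {U₁ U₂ : Tm} (h : Cpr L U₁ U₂) {l m : ℕ} {K : Env} {T₁ : Tm}
    (hL : Drop l m L K) (hT₁ : Lift l m T₁ U₁) : ∃ T₂, Lift l m T₂ U₂ ∧ Cpr K T₁ T₂ := by
  induction h generalizing l K T₁ with
  | sort | lref => exact ⟨T₁, hT₁, .refl _ _⟩
  | bind _ _ ihW ihT =>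
    cases hT₁ with
    | bind hW hT =>
      obtain ⟨W₂, hW₂, cW⟩ := ihW hL hW
      obtain ⟨T₂, hT₂, cT⟩ := ihT (hL.skip hW) hT
      exact ⟨_, hW₂.bind hT₂, cW.bind cT⟩
  | flat _ _ ihV ihT =>
    cases hT₁ with
    | flat hV hT =>
      obtain ⟨V₂, hV₂, cV⟩ := ihV hL hV
      obtain ⟨T₂, hT₂, cT⟩ := ihT hL hT
      exact ⟨_, hV₂.flat hT₂, cV.flat cT⟩
  | @delta _ _ _ V₂ _ j hK hV hW ih =>
    obtain rfl := hW.eq_lift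
    cases hT₁ with
    | lt hj =>
      obtain ⟨d, rfl⟩ : ∃ d, l = j + d + 1 := ⟨l - (j + 1), by omega⟩
      obtain ⟨K', V', hK', hd, hV'⟩ := hL.conf_lt hK
      obtain ⟨V₂', hV₂', cV⟩ := ih hd hV'
      refine ⟨V₂'.lift 0 (j + 1), ?_, .delta hK' cV (Tm.lift_spec ..)⟩
      rw [hV₂'.eq_lift, Tm.lift_lift_comm m (j + 1) (Nat.zero_le d),
        show d + (j + 1) = j + d + 1 by omega]
      exact Tm.lift_spec ..
    | @ge _ _ i hi =>
      refine ⟨V₂.lift 0 (i + 1), ?_, .delta (hL.conf_ge hK hi) hV (Tm.lift_spec ..)⟩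
      rw [Nat.add_right_comm, ← Tm.lift_lift_of_le_of_le m (Nat.zero_le l) (by omega)]
      exact Tm.lift_spec ..
  | beta _ _ _ ihV ihW ihT =>
    cases hT₁ with
    | flat hV hB =>
      cases hB with
      | bind hW hT =>
        obtain ⟨V₂, hV₂, cV⟩ := ihV hL hV
        obtain ⟨W₂, hW₂, cW⟩ := ihW hL hW
        obtain ⟨T₂, hT₂, cT⟩ := ihT (hL.skip hW) hT
        exact ⟨_, (hW₂.flat hV₂).bind hT₂, .beta cV cW cT⟩
  | zeta _ hU ih =>
    cases hT₁ with
    | bind hV hT =>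
      obtain ⟨X, hX, cX⟩ := ih (hL.skip hV) hT
      obtain ⟨C, hC, hCX⟩ :=
        Tm.exists_lift_of_lift_eq_lift (by omega) (hU.eq_lift.symm.trans hX.eq_lift)
      rw [Nat.add_sub_cancel] at hC
      exact ⟨C, hC ▸ Tm.lift_spec .., .zeta cX (hCX ▸ Tm.lift_spec ..)⟩
  | eps _ ih =>
    cases hT₁ with
    | flat _ hT =>
      obtain ⟨T₂, hT₂, cT⟩ := ih hL hT
      exact ⟨T₂, hT₂, .eps cT⟩
  | theta _ hW _ _ ihV ihU ihT =>
    obtain rfl := hW.eq_lift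
    cases hT₁ with
    | flat hV hB =>
      cases hB with
      | bind hU hT =>
        obtain ⟨V₂, hV₂, cV⟩ := ihV hL hV
        obtain ⟨U₂, hU₂, cU⟩ := ihU hL hU
        obtain ⟨T₂, hT₂, cT⟩ := ihT (hL.skip hU) hT
        refine ⟨_, hU₂.bind (.flat ?_ hT₂), .theta cV (Tm.lift_spec ..) cU cT⟩
        rw [hV₂.eq_lift, Tm.lift_lift_comm m 1 (Nat.zero_le l)]
        exact Tm.lift_spec ..

end Cpr

namespace LsubR

theorem refl : ∀ L : Env, LsubR L L
  | .null => .atom .null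
  | .pair L _ _ => .pair (refl L)

theorem drop_abbr {L₁ L₂ : Env} (h : LsubR L₁ L₂) {i : ℕ} {K₂ : Env} {V : Tm}
    (hK₂ : Drop 0 i L₂ (.pair K₂ .abbr V)) :
    ∃ K₁, Drop 0 i L₁ (.pair K₁ .abbr V) ∧ LsubR K₁ K₂ := by
  induction h generalizing i with
  | atom => cases hK₂
  | pair h ih =>
    cases hK₂ with
    | pair hK₂ =>
      obtain rfl := Drop.eq_of_zero_zero hK₂
      exact ⟨_, Drop.refl_zero _, h⟩
    | drop hK₂ =>
      obtain ⟨K₁, hK₁, h₁⟩ := ih hK₂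
      exact ⟨K₁, .drop hK₁, h₁⟩
  | beta _ ih =>
    cases hK₂ with
    | drop hK₂ =>
      obtain ⟨K₁, hK₁, h₁⟩ := ih hK₂
      exact ⟨K₁, .drop hK₁, h₁⟩

end LsubR

theorem Cpr.of_lsubR {L₂ : Env} {T₁ T₂ : Tm} (h : Cpr L₂ T₁ T₂) {L₁ : Env} (hL : LsubR L₁ L₂) :
    Cpr L₁ T₁ T₂ := by
  induction h generalizing L₁ with
  | sort => exact .sort
  | lref => exact .lref
  | bind _ _ ihW ihT => exact .bind (ihW hL) (ihT hL.pair)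
  | flat _ _ ihV ihT => exact .flat (ihV hL) (ihT hL)
  | delta hK _ hW ih =>
    obtain ⟨K₁, hK₁, hKK₁⟩ := hL.drop_abbr hK
    exact .delta hK₁ (ih hKK₁) hW
  | beta _ _ _ ihV ihW ihT => exact .beta (ihV hL) (ihW hL) (ihT hL.pair)
  | zeta _ hU ih => exact .zeta (ih hL.pair) hU
  | eps _ ih => exact .eps (ih hL)
  | theta _ hW _ _ ihV ihU ihT => exact .theta (ihV hL) hW (ihU hL) (ihT hL.pair)

def Diamond (L : Env) (T : Tm) : Prop :=
  ∀ ⦃L₁ L₂ : Env⦄ ⦃T₁ T₂ : Tm⦄, Cpr L T T₁ → Cpr L T T₂ → Lpr L L₁ → Lpr L L₂ →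
    ∃ T', Cpr L₁ T₁ T' ∧ Cpr L₂ T₂ T'

section CriticalPairs

variable {L₀ L₁ L₂ : Env}

theorem diamond_lref_delta {K : Env} {V₁ V₂ W₂ : Tm} {i : ℕ}
    (hK : Drop 0 i L₀ (.pair K .abbr V₁)) (ihV : Diamond K V₁) (hV : Cpr K V₁ V₂)
    (hW : Lift 0 (i + 1) V₂ W₂) (hL₁ : Lpr L₀ L₁) (hL₂ : Lpr L₀ L₂) :
    ∃ T, Cpr L₁ (.lref i) T ∧ Cpr L₂ W₂ T := by
  obtain ⟨K₁, V₁', hK₁, hKK₁, hV₁'⟩ := hL₁.drop hK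
  obtain ⟨K₂, _, hK₂, hKK₂, -⟩ := hL₂.drop hK
  obtain ⟨X, c₁, c₂⟩ := ihV hV₁' hV hKK₁ hKK₂
  obtain rfl := hW.eq_lift
  exact ⟨X.lift 0 (i + 1), .delta hK₁ c₁ (Tm.lift_spec ..), c₂.lift hK₂.succ_of_pair⟩

theorem diamond_delta_delta {Ka Kb : Env} {Va₁ Va₂ Wa Vb₁ Vb₂ Wb : Tm} {i : ℕ}
    (hKa : Drop 0 i L₀ (.pair Ka .abbr Va₁)) (ihV : Diamond Ka Va₁) (hVa : Cpr Ka Va₁ Va₂)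
    (hWa : Lift 0 (i + 1) Va₂ Wa) (hKb : Drop 0 i L₀ (.pair Kb .abbr Vb₁))
    (hVb : Cpr Kb Vb₁ Vb₂) (hWb : Lift 0 (i + 1) Vb₂ Wb) (hL₁ : Lpr L₀ L₁) (hL₂ : Lpr L₀ L₂) :
    ∃ T, Cpr L₁ Wa T ∧ Cpr L₂ Wb T := by
  obtain ⟨rfl, -, rfl⟩ := Env.pair.inj (hKa.zero_unique hKb)
  obtain ⟨K₁, _, hK₁, hKK₁, -⟩ := hL₁.drop hKa
  obtain ⟨K₂, _, hK₂, hKK₂, -⟩ := hL₂.drop hKa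
  obtain ⟨X, c₁, c₂⟩ := ihV hVa hVb hKK₁ hKK₂
  obtain rfl := hWa.eq_lift
  obtain rfl := hWb.eq_lift
  exact ⟨X.lift 0 (i + 1), c₁.lift hK₁.succ_of_pair, c₂.lift hK₂.succ_of_pair⟩

theorem diamond_bind_bind {b : Bk} {W Wa Wb T Ta Tb : Tm}
    (ihW : Diamond L₀ W) (ihT : Diamond (.pair L₀ b W) T)
    (hWa : Cpr L₀ W Wa) (hTa : Cpr (.pair L₀ b W) T Ta)
    (hWb : Cpr L₀ W Wb) (hTb : Cpr (.pair L₀ b W) T Tb) (hL₁ : Lpr L₀ L₁) (hL₂ : Lpr L₀ L₂) :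
    ∃ X, Cpr L₁ (.bind b Wa Ta) X ∧ Cpr L₂ (.bind b Wb Tb) X := by
  obtain ⟨W', cWa, cWb⟩ := ihW hWa hWb hL₁ hL₂
  obtain ⟨T', cTa, cTb⟩ := ihT hTa hTb (hL₁.pair hWa) (hL₂.pair hWb)
  exact ⟨.bind b W' T', cWa.bind cTa, cWb.bind cTb⟩

theorem diamond_bind_zeta {V Va U Ua Ub Tb : Tm} (ihU : Diamond (.pair L₀ .abbr V) U)
    (hVa : Cpr L₀ V Va) (hUa : Cpr (.pair L₀ .abbr V) U Ua)
    (hUb : Cpr (.pair L₀ .abbr V) U Ub) (hTb : Lift 0 1 Tb Ub)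
    (hL₁ : Lpr L₀ L₁) (hL₂ : Lpr L₀ L₂) :
    ∃ X, Cpr L₁ (.bind .abbr Va Ua) X ∧ Cpr L₂ Tb X := by
  obtain ⟨Y, c₁, c₂⟩ := ihU hUa hUb (hL₁.pair hVa) (hL₂.pair (.refl _ V))
  obtain ⟨X, hX, cX⟩ := c₂.inv_lift (.drop (.refl_zero L₂)) hTb
  exact ⟨X, .zeta c₁ hX, cX⟩

theorem diamond_zeta_zeta {V U Ua Ta Ub Tb : Tm} (ihU : Diamond (.pair L₀ .abbr V) U)
    (hUa : Cpr (.pair L₀ .abbr V) U Ua) (hTa : Lift 0 1 Ta Ua)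
    (hUb : Cpr (.pair L₀ .abbr V) U Ub) (hTb : Lift 0 1 Tb Ub)
    (hL₁ : Lpr L₀ L₁) (hL₂ : Lpr L₀ L₂) :
    ∃ X, Cpr L₁ Ta X ∧ Cpr L₂ Tb X := by
  obtain ⟨Y, c₁, c₂⟩ := ihU hUa hUb (hL₁.pair (.refl _ V)) (hL₂.pair (.refl _ V))
  obtain ⟨X₁, hX₁, cX₁⟩ := c₁.inv_lift (.drop (.refl_zero L₁)) hTa
  obtain ⟨X₂, hX₂, cX₂⟩ := c₂.inv_lift (.drop (.refl_zero L₂)) hTb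
  obtain rfl := hX₁.inj_left hX₂
  exact ⟨X₁, cX₁, cX₂⟩

theorem diamond_flat_flat {f : Fk} {V Va Vb T Ta Tb : Tm} (ihV : Diamond L₀ V) (ihT : Diamond L₀ T)
    (hVa : Cpr L₀ V Va) (hTa : Cpr L₀ T Ta) (hVb : Cpr L₀ V Vb) (hTb : Cpr L₀ T Tb)
    (hL₁ : Lpr L₀ L₁) (hL₂ : Lpr L₀ L₂) :
    ∃ X, Cpr L₁ (.flat f Va Ta) X ∧ Cpr L₂ (.flat f Vb Tb) X := by
  obtain ⟨V', cVa, cVb⟩ := ihV hVa hVb hL₁ hL₂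
  obtain ⟨T', cTa, cTb⟩ := ihT hTa hTb hL₁ hL₂
  exact ⟨.flat f V' T', cVa.flat cTa, cVb.flat cTb⟩

theorem diamond_flat_eps {Ua T Ta Tb : Tm} (ihT : Diamond L₀ T)
    (hTa : Cpr L₀ T Ta) (hTb : Cpr L₀ T Tb) (hL₁ : Lpr L₀ L₁) (hL₂ : Lpr L₀ L₂) :
    ∃ X, Cpr L₁ (.flat .cast Ua Ta) X ∧ Cpr L₂ Tb X := by
  obtain ⟨T', cTa, cTb⟩ := ihT hTa hTb hL₁ hL₂
  exact ⟨T', .eps cTa, cTb⟩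

theorem diamond_flat_beta {V Va Vb W Wb T Tb A : Tm}
    (ihV : Diamond L₀ V) (ihW : Diamond L₀ W) (ihT : Diamond (.pair L₀ .abst W) T)
    (hVa : Cpr L₀ V Va) (hA : Cpr L₀ (.bind .abst W T) A)
    (hVb : Cpr L₀ V Vb) (hWb : Cpr L₀ W Wb) (hTb : Cpr (.pair L₀ .abst W) T Tb)
    (hL₁ : Lpr L₀ L₁) (hL₂ : Lpr L₀ L₂) :
    ∃ X, Cpr L₁ (.flat .appl Va A) X ∧ Cpr L₂ (.bind .abbr (.flat .cast Wb Vb) Tb) X := by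
  cases hA with
  | bind hWa hTa =>
    obtain ⟨V', cVa, cVb⟩ := ihV hVa hVb hL₁ hL₂
    obtain ⟨W', cWa, cWb⟩ := ihW hWa hWb hL₁ hL₂
    obtain ⟨T', cTa, cTb⟩ := ihT hTa hTb (hL₁.pair hWa) (hL₂.pair hWb)
    exact ⟨_, .beta cVa cWa cTa, (cWb.flat cVb).bind (cTb.of_lsubR (.beta (.refl L₂)))⟩

theorem diamond_beta_beta {V Va Vb W Wa Wb T Ta Tb : Tm}
    (ihV : Diamond L₀ V) (ihW : Diamond L₀ W) (ihT : Diamond (.pair L₀ .abst W) T)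
    (hVa : Cpr L₀ V Va) (hWa : Cpr L₀ W Wa) (hTa : Cpr (.pair L₀ .abst W) T Ta)
    (hVb : Cpr L₀ V Vb) (hWb : Cpr L₀ W Wb) (hTb : Cpr (.pair L₀ .abst W) T Tb)
    (hL₁ : Lpr L₀ L₁) (hL₂ : Lpr L₀ L₂) :
    ∃ X, Cpr L₁ (.bind .abbr (.flat .cast Wa Va) Ta) X ∧
      Cpr L₂ (.bind .abbr (.flat .cast Wb Vb) Tb) X := by
  obtain ⟨V', cVa, cVb⟩ := ihV hVa hVb hL₁ hL₂
  obtain ⟨W', cWa, cWb⟩ := ihW hWa hWb hL₁ hL₂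
  obtain ⟨T', cTa, cTb⟩ := ihT hTa hTb (hL₁.pair hWa) (hL₂.pair hWb)
  exact ⟨_, (cWa.flat cVa).bind (cTa.of_lsubR (.beta (.refl L₁))),
    (cWb.flat cVb).bind (cTb.of_lsubR (.beta (.refl L₂)))⟩

theorem diamond_flat_theta {V Va Vb Wb U Ub T Tb A : Tm}
    (ihV : Diamond L₀ V) (ihU : Diamond L₀ U) (ihT : Diamond (.pair L₀ .abbr U) T)
    (hVa : Cpr L₀ V Va) (hA : Cpr L₀ (.bind .abbr U T) A)
    (hVb : Cpr L₀ V Vb) (hWb : Lift 0 1 Vb Wb) (hUb : Cpr L₀ U Ub)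
    (hTb : Cpr (.pair L₀ .abbr U) T Tb) (hL₁ : Lpr L₀ L₁) (hL₂ : Lpr L₀ L₂) :
    ∃ X, Cpr L₁ (.flat .appl Va A) X ∧ Cpr L₂ (.bind .abbr Ub (.flat .appl Wb Tb)) X := by
  obtain rfl := hWb.eq_lift
  obtain ⟨V', cVa, cVb⟩ := ihV hVa hVb hL₁ hL₂
  have cWb := cVb.lift (.drop (.refl_zero L₂) : Drop 0 1 (.pair L₂ .abbr Ub) L₂)
  cases hA with
  | bind hUa hTa =>
    obtain ⟨U', cUa, cUb⟩ := ihU hUa hUb hL₁ hL₂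
    obtain ⟨T', cTa, cTb⟩ := ihT hTa hTb (hL₁.pair hUa) (hL₂.pair hUb)
    exact ⟨_, .theta cVa (Tm.lift_spec ..) cUa cTa, cUb.bind (cWb.flat cTb)⟩
  | zeta hTa hA =>
    obtain ⟨Y, cTa, cTb⟩ := ihT hTa hTb (hL₁.pair (.refl _ U)) (hL₂.pair hUb)
    obtain ⟨X, hX, cX⟩ := cTa.inv_lift (.drop (.refl_zero L₁)) hA
    refine ⟨.flat .appl V' X, cVa.flat cX, .zeta (cWb.flat cTb) ?_⟩
    rw [hX.eq_lift]
    exact Tm.lift_spec ..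

theorem diamond_theta_theta {V Va Wa Vb Wb U Ua Ub T Ta Tb : Tm}
    (ihV : Diamond L₀ V) (ihU : Diamond L₀ U) (ihT : Diamond (.pair L₀ .abbr U) T)
    (hVa : Cpr L₀ V Va) (hWa : Lift 0 1 Va Wa) (hUa : Cpr L₀ U Ua)
    (hTa : Cpr (.pair L₀ .abbr U) T Ta)
    (hVb : Cpr L₀ V Vb) (hWb : Lift 0 1 Vb Wb) (hUb : Cpr L₀ U Ub)
    (hTb : Cpr (.pair L₀ .abbr U) T Tb) (hL₁ : Lpr L₀ L₁) (hL₂ : Lpr L₀ L₂) :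
    ∃ X, Cpr L₁ (.bind .abbr Ua (.flat .appl Wa Ta)) X ∧
      Cpr L₂ (.bind .abbr Ub (.flat .appl Wb Tb)) X := by
  obtain rfl := hWa.eq_lift
  obtain rfl := hWb.eq_lift
  obtain ⟨V', cVa, cVb⟩ := ihV hVa hVb hL₁ hL₂
  obtain ⟨U', cUa, cUb⟩ := ihU hUa hUb hL₁ hL₂
  obtain ⟨T', cTa, cTb⟩ := ihT hTa hTb (hL₁.pair hUa) (hL₂.pair hUb)
  exact ⟨_, cUa.bind ((cVa.lift (.drop (.refl_zero _))).flat cTa),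
    cUb.bind ((cVb.lift (.drop (.refl_zero _))).flat cTb)⟩

end CriticalPairs

theorem diamond (L : Env) (T : Tm) : Diamond L T := by
  intro L₁ L₂ T₁ T₂ h₁ h₂ hL₁ hL₂
  -- `cases` would substitute `T` away; the equation keeps the measure visible to `decreasing_by`,
  -- which also uses the `weight_le` facts recorded in the δ-branches.
  generalize hT : T = T₀ at h₁ h₂
  cases h₁ with
  | sort => cases h₂ with | sort => exact ⟨_, .sort, .sort⟩
  | lref =>
    cases h₂ with
    | lref => exact ⟨_, .lref, .lref⟩
    | delta hK hV hW =>
      have := hK.weight_le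
      exact diamond_lref_delta hK (diamond _ _) hV hW hL₁ hL₂
  | delta hKa hVa hWa =>
    have := hKa.weight_le
    cases h₂ with
    | lref => exact (diamond_lref_delta hKa (diamond _ _) hVa hWa hL₂ hL₁).imp fun _ => And.symm
    | delta hKb hVb hWb =>
      exact diamond_delta_delta hKa (diamond _ _) hVa hWa hKb hVb hWb hL₁ hL₂
  | bind hWa hTa =>
    cases h₂ with
    | bind hWb hTb => exact diamond_bind_bind (diamond _ _) (diamond _ _) hWa hTa hWb hTb hL₁ hL₂
    | zeta hUb hTb => exact diamond_bind_zeta (diamond _ _) hWa hTa hUb hTb hL₁ hL₂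
  | zeta hUa hTa =>
    cases h₂ with
    | bind hWb hTb =>
      exact (diamond_bind_zeta (diamond _ _) hWb hTb hUa hTa hL₂ hL₁).imp fun _ => And.symm
    | zeta hUb hTb => exact diamond_zeta_zeta (diamond _ _) hUa hTa hUb hTb hL₁ hL₂
  | flat hVa hTa =>
    cases h₂ with
    | flat hVb hTb => exact diamond_flat_flat (diamond _ _) (diamond _ _) hVa hTa hVb hTb hL₁ hL₂
    | beta hVb hWb hTb =>
      exact diamond_flat_beta (diamond _ _) (diamond _ _) (diamond _ _) hVa hTa hVb hWb hTb hL₁ hL₂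
    | eps hTb => exact diamond_flat_eps (diamond _ _) hTa hTb hL₁ hL₂
    | theta hVb hWb hUb hTb =>
      exact diamond_flat_theta (diamond _ _) (diamond _ _) (diamond _ _) hVa hTa hVb hWb hUb hTb
        hL₁ hL₂
  | beta hVa hWa hTa =>
    cases h₂ with
    | flat hVb hTb =>
      exact (diamond_flat_beta (diamond _ _) (diamond _ _) (diamond _ _) hVb hTb hVa hWa hTa
        hL₂ hL₁).imp fun _ => And.symm
    | beta hVb hWb hTb =>
      exact diamond_beta_beta (diamond _ _) (diamond _ _) (diamond _ _) hVa hWa hTa hVb hWb hTb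
        hL₁ hL₂
  | eps hTa =>
    cases h₂ with
    | flat hVb hTb => exact (diamond_flat_eps (diamond _ _) hTb hTa hL₂ hL₁).imp fun _ => And.symm
    | eps hTb => exact diamond _ _ hTa hTb hL₁ hL₂
  | theta hVa hWa hUa hTa =>
    cases h₂ with
    | flat hVb hTb =>
      exact (diamond_flat_theta (diamond _ _) (diamond _ _) (diamond _ _) hVb hTb hVa hWa hUa hTa
        hL₂ hL₁).imp fun _ => And.symm
    | theta hVb hWb hUb hTb =>
      exact diamond_theta_theta (diamond _ _) (diamond _ _) (diamond _ _) hVa hWa hUa hTa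
        hVb hWb hUb hTb hL₁ hL₂
termination_by L.weight + T.size
decreasing_by all_goals subst_vars; simp only [Env.weight, Tm.size] at *; omega

theorem cpr_conf_lpr {L₀ L₁ L₂ : Env} {T₀ T₁ T₂ : Tm}
    (h₁ : Cpr L₀ T₀ T₁) (h₂ : Cpr L₀ T₀ T₂)
    (hL₁ : Lpr L₀ L₁) (hL₂ : Lpr L₀ L₂) :
    ∃ T : Tm, Cpr L₁ T₁ T ∧ Cpr L₂ T₂ T :=
  diamond L₀ T₀ h₁ h₂ hL₁ hL₂
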